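/- Let π: E → B be a continuous map between topological spaces having the homotopy lifting property with respect to all topological spaces (i.e., for every space Y, every continuous H₀: Y → E and h: [0,1]×Y → B with π∘H₀ = h(0,·), there is a continuous H: [0,1]×Y → E with H(0,·) = H₀ and π∘H = h). Let U ⊆ B be an open set admitting a contraction, i.e., a continuous map c: [0,1]×U → U with c(0,u) = u for all u and c(1,u) = b for a fixed point b ∈ U. Set E_U = π^{-1}(U), π_U = π|_{E_U}, F = π^{-1}(b). Then there exist continuous maps Φ: E_U → U×F and Φ′: U×F → E_U with pr_U∘Φ = π_U and π_U∘Φ′ = pr_U, together with continuous homotopies H: [0,1]×E_U → E_U and H′: [0,1]×U×F → U×F satisfying π_U(H(t,e)) = π_U(e), pr_U(H′(t,u,y)) = u, H(0,·) = id, H(1,·) = Φ′∘Φ, H′(0,·) = id, and H′(1,·) = Φ∘Φ′. In other words, π is fiber homotopy trivial over every contractible open subset of B. -/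

import Mathlib

/-!
Lifting the contraction `c` from the inclusion `E_U → E` pushes `E_U` into the fibre `F` and
gives `Φ`; lifting the reversed contraction from `F` spreads it back over `U` and gives `Φ'`.
In either composite a point travels along a lift of a path followed by a lift of its reverse,
which covers a loop that is null-homotopic rel endpoints. Lifting that null-homotopy yields a
square whose three other sides lie over a single point, and running along them is the fibrewise
homotopy.
-/

open unitInterval

universe w v

def HasHomotopyLifting {E : Type w} {B : Type v} [TopologicalSpace E] [TopologicalSpace B]
    (π : E → B) : Prop :=
  ∀ (Y : Type w) [TopologicalSpace Y] (H0 : Y → E) (h : I × Y → B),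
    Continuous H0 → Continuous h → (∀ y, π (H0 y) = h (0, y)) →
    ∃ H : I × Y → E, Continuous H ∧ (∀ y, H (0, y) = H0 y) ∧ ∀ p, π (H p) = h p

namespace ContinuousMap

variable {X Y : Type*} [TopologicalSpace X] [TopologicalSpace Y]

def toHomotopy (H : C(I × X, Y)) : Homotopy (H.curry 0) (H.curry 1) where
  toContinuousMap := H
  map_zero_left _ := rfl
  map_one_left _ := rfl

@[simp]
theorem toHomotopy_apply (H : C(I × X, Y)) (p : I × X) : H.toHomotopy p = H p :=
  rfl

theorem homotopicWith_curry (H : C(I × X, Y)) {P : C(X, Y) → Prop} (hP : ∀ t, P (H.curry t)) :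
    (H.curry 0).HomotopicWith (H.curry 1) P :=
  ⟨{ H.toHomotopy with prop' := hP }⟩

theorem homotopicWith_curry_zero_of_three_sides {B : Type*} {π : Y → B} {β : X → B}
    (K : C(I × (I × X), Y))
    (hK : ∀ s t x, (s = 1 ∨ t = 0 ∨ t = 1) → π (K (s, (t, x))) = β x) :
    ((K.curry 0).curry 0).HomotopicWith ((K.curry 0).curry 1) fun g => ∀ x, π (g x) = β x := by
  let left : C(I × X, Y) := ⟨fun p => K (p.1, (0, p.2)), by fun_prop⟩
  let right : C(I × X, Y) := ⟨fun p => K (p.1, (1, p.2)), by fun_prop⟩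
  exact ((left.homotopicWith_curry fun s x => hK s 0 x (by simp)).trans
    ((K.curry 1).homotopicWith_curry fun t x => hK 1 t x (by simp))).trans
    (right.homotopicWith_curry fun s x => hK s 1 x (by simp)).symm

end ContinuousMap

section

open ContinuousMap Path.Homotopy

variable {E Y : Type w} {B : Type v} [TopologicalSpace E] [TopologicalSpace B]
  [TopologicalSpace Y] {π : E → B}

theorem HasHomotopyLifting.homotopicWith_of_lift_trans_lift_symm (hlp : HasHomotopyLifting π)
    (α : C(I × Y, B)) (F G : C(I × Y, E)) (hFG : F.curry 1 = G.curry 0)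
    (hF : ∀ p, π (F p) = α p) (hG : ∀ t y, π (G (t, y)) = α (σ t, y)) :
    (F.curry 0).HomotopicWith (G.curry 1) fun g => ∀ y, π (g y) = α (0, y) := by
  let L := F.toHomotopy.trans (G.toHomotopy.cast hFG.symm rfl)
  -- the standard null-homotopy of `α.trans α.symm`, run backwards
  let Γ (q : I × (I × Y)) : B :=
    α (⟨reflTransSymmAux (σ q.1, q.2.1), reflTransSymmAux_mem_I _⟩, q.2.2)
  have hL : ∀ q, π (L q) = Γ (0, q) := by
    rintro ⟨t, y⟩
    rw [Homotopy.trans_apply]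
    split_ifs with ht <;>
      simp only [Homotopy.cast_apply, toHomotopy_apply, hF, hG, Γ, reflTransSymmAux, ht,
        if_true, if_false] <;>
      congr 2 <;> ext <;> simp only [coe_symm_eq, symm_zero, Set.Icc.coe_one] <;> ring
  obtain ⟨K, hK, hK0, hKΓ⟩ := hlp (I × Y) L Γ L.continuous (by fun_prop) hL
  have hsides : ∀ s t y, (s = 1 ∨ t = 0 ∨ t = 1) → π (K (s, (t, y))) = α (0, y) := by
    rintro s t y hst
    simp only [hKΓ, Γ]
    congr
    rcases hst with rfl | rfl | rfl <;> norm_num [reflTransSymmAux]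
  convert homotopicWith_curry_zero_of_three_sides ⟨K, hK⟩ hsides using 1 <;>
    ext y <;> simp [hK0, L]

end

theorem stmt9.{u} {E B : Type u} [TopologicalSpace E] [TopologicalSpace B]
    (π : E → B) (hπ : Continuous π)
    (hlp : ∀ (Y : Type u) [TopologicalSpace Y] (H0 : Y → E) (h : I × Y → B),
      Continuous H0 → Continuous h → (∀ y, π (H0 y) = h (0, y)) →
      ∃ H : I × Y → E, Continuous H ∧ (∀ y, H (0, y) = H0 y) ∧ ∀ p, π (H p) = h p)
    (U : Set B) (hU : IsOpen U) (b : B) (hb : b ∈ U)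
    (c : I × U → U) (hc : Continuous c)
    (hc0 : ∀ u : U, c (0, u) = u) (hc1 : ∀ u : U, c (1, u) = ⟨b, hb⟩) :
    ∃ (Φ : {e : E // π e ∈ U} → U × {e : E // π e = b})
      (Φ' : U × {e : E // π e = b} → {e : E // π e ∈ U})
      (H : I × {e : E // π e ∈ U} → {e : E // π e ∈ U})
      (H' : I × (U × {e : E // π e = b}) → U × {e : E // π e = b}),
      Continuous Φ ∧ Continuous Φ' ∧ Continuous H ∧ Continuous H' ∧
      (∀ e, ((Φ e).1 : B) = π e.1) ∧
      (∀ p, π (Φ' p).1 = (p.1 : B)) ∧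
      (∀ t e, π (H (t, e)).1 = π e.1) ∧
      (∀ t p, ((H' (t, p)).1 : B) = (p.1 : B)) ∧
      (∀ e, H (0, e) = e) ∧ (∀ e, H (1, e) = Φ' (Φ e)) ∧
      (∀ p, H' (0, p) = p) ∧ (∀ p, H' (1, p) = Φ (Φ' p)) := by
  let γ : C(I × {e : E // π e ∈ U}, B) :=
    ⟨fun p => c (p.1, ⟨π p.2, p.2.2⟩), by fun_prop⟩
  let γ' : C(I × (U × {e : E // π e = b}), B) :=
    ⟨fun p => c (σ p.1, p.2.1), by fun_prop⟩
  obtain ⟨R, hR, hR0, hRπ⟩ :=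
    hlp _ Subtype.val γ continuous_subtype_val γ.continuous (by simp [γ, hc0])
  obtain ⟨S, hS, hS0, hSπ⟩ :=
    hlp _ (fun p => p.2.1) γ' (by fun_prop) γ'.continuous (by simp [γ', hc1])
  let Φ : C({e : E // π e ∈ U}, U × {e : E // π e = b}) :=
    ⟨fun e => (⟨π e, e.2⟩, ⟨R (1, e), by simp [hRπ, γ, hc1]⟩), by fun_prop⟩
  let Φ' : C(U × {e : E // π e = b}, {e : E // π e ∈ U}) :=
    ⟨fun p => ⟨S (1, p), by simp [hSπ, γ', hc0]⟩, by fun_prop⟩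
  have hΦ' (p) : π (Φ' p) = p.1 := by simp [Φ', hSπ, γ', hc0]
  obtain ⟨M⟩ := HasHomotopyLifting.homotopicWith_of_lift_trans_lift_symm hlp γ ⟨R, hR⟩
    ⟨fun p => S (p.1, Φ p.2), by fun_prop⟩ (by ext; simp [hS0, Φ]) hRπ
    (fun t e => hSπ (t, Φ e))
  obtain ⟨M'⟩ := HasHomotopyLifting.homotopicWith_of_lift_trans_lift_symm hlp γ' ⟨S, hS⟩
    ⟨fun p => R (p.1, Φ' p.2), by fun_prop⟩ (by ext; simp [hR0, Φ']) hSπ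
    (by simp [hRπ, γ, γ', hΦ'])
  have hM (q : I × {e : E // π e ∈ U}) : π (M q) = π q.2 :=
    (M.prop q.1 q.2).trans (by simp [γ, hc0])
  have hM' (q : I × (U × {e : E // π e = b})) : π (M' q) = b :=
    (M'.prop q.1 q.2).trans (by simp [γ', hc1])
  refine ⟨Φ, Φ', fun q => ⟨M q, hM q ▸ q.2.2⟩, fun q => (q.2.1, ⟨M' q, hM' q⟩),
    Φ.continuous, Φ'.continuous, by fun_prop, by fun_prop,
    fun _ => rfl, hΦ', fun t e => hM (t, e), fun _ _ => rfl,
    fun e => Subtype.ext ((M.apply_zero e).trans (hR0 e)), fun e => Subtype.ext (M.apply_one e),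
    fun p => Prod.ext rfl (Subtype.ext ((M'.apply_zero p).trans (hS0 p))),
    fun p => Prod.ext (Subtype.ext (hΦ' p).symm) (Subtype.ext (M'.apply_one p))⟩
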